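/- arXiv:1607.01381 — 6 statements merged into one kernel-verified Lean document; each statement's English description precedes it below -/
import Mathlib

section
/- Let L be a finite set, let g map subsets of L to nonnegative reals with g(∅)=0, suppose g(w ∪ {ℓ}) ≥ g(w) − ε for all w ⊆ L and ℓ ∈ L (approximate monotonicity), and suppose g(w_a ∪ {ℓ}) − g(w_a) ≥ g(w_b ∪ {ℓ}) − g(w_b) − θ for all w_a ⊆ w_b ⊆ L and ℓ ∈ L (approximate submodularity). Let w_k be the set produced by the greedy algorithm that, starting from the empty set, adds k times an element maximizing the marginal increase of g. Then g(w_k) ≥ (1 − (1 − 1/k)^k) · (max over subsets w of size k of g(w) − (k−1)θ − kε). -/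
open Finset

/-- The greedy algorithm: `w 0 = ∅` and `w (i+1)` is obtained from `w i` by inserting an
element maximizing the marginal increase of `g`. -/
def IsGreedy {L : Type*} [DecidableEq L] (g : Finset L → ℝ) (w : ℕ → Finset L) : Prop :=
  w 0 = ∅ ∧ ∀ i, ∃ ℓ : L, w (i + 1) = insert ℓ (w i) ∧
    ∀ ℓ' : L, g (insert ℓ' (w i)) ≤ g (insert ℓ (w i))

/-- Approximate Nemhauser–Wolsey–Fisher guarantee: greedy maximization of an
approximately monotone, approximately submodular nonnegative set function. -/
theorem greedy_approx_guarantee {L : Type*} [Fintype L] [DecidableEq L]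
    (g : Finset L → ℝ) (ε θ : ℝ) (hε : 0 ≤ ε) (hθ : 0 ≤ θ)
    (hg0 : g ∅ = 0) (hgnn : ∀ w : Finset L, 0 ≤ g w)
    (hmono : ∀ (w : Finset L) (ℓ : L), g w - ε ≤ g (insert ℓ w))
    (hsub : ∀ wa wb : Finset L, wa ⊆ wb → ∀ ℓ : L,
      g (insert ℓ wb) - g wb - θ ≤ g (insert ℓ wa) - g wa)
    (k : ℕ) (hk : 1 ≤ k)
    (w : ℕ → Finset L) (hw : IsGreedy g w)
    (s : Finset L) (hs : s.card = k) :
    (1 - (1 - 1 / (k : ℝ)) ^ k) * (g s - (k - 1 : ℝ) * θ - (k : ℝ) * ε) ≤ g (w k) := by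
  classical
  obtain ⟨hw0, hwstep⟩ := hw
  have hkpos : (0:ℝ) < (k:ℝ) := by exact_mod_cast hk
  have hk1 : (1:ℝ) ≤ (k:ℝ) := by exact_mod_cast hk
  -- approximate monotonicity, many elements
  have lem1 : ∀ u t : Finset L, g t - u.card * ε ≤ g (t ∪ u) := by
    intro u
    induction u using Finset.induction_on with
    | empty => intro t; simp
    | @insert a u' ha ih =>
      intro t
      have h1 := ih t
      have h2 := hmono (t ∪ u') a
      rw [Finset.union_insert, Finset.card_insert_of_notMem ha]
      push_cast
      linarith
  -- approximate submodularity, telescoping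
  have lem2 : ∀ t v : Finset L, t.Nonempty →
      g (v ∪ t) - g v ≤ (∑ ℓ ∈ t, (g (insert ℓ v) - g v)) + ((t.card : ℝ) - 1) * θ := by
    intro t
    induction t using Finset.induction_on with
    | empty => intro v h; exact absurd rfl (Finset.nonempty_iff_ne_empty.mp h)
    | @insert a t' ha ih =>
      intro v _
      rcases t'.eq_empty_or_nonempty with h' | h'
      · subst h'
        rw [show v ∪ insert a ∅ = insert a v by ext x; simp [or_comm]]
        simp
      · have h1 := ih v h'
        have h2 := hsub v (v ∪ t') Finset.subset_union_left a
        rw [Finset.union_insert, Finset.sum_insert ha, Finset.card_insert_of_notMem ha]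
        push_cast
        linarith
  -- cardinality of greedy sets
  have cardw : ∀ i, (w i).card ≤ i := by
    intro i
    induction i with
    | zero => simp [hw0]
    | succ n ih =>
      obtain ⟨ℓ, h1, _⟩ := hwstep n
      rw [h1]
      exact le_trans (Finset.card_insert_le _ _) (Nat.succ_le_succ ih)
  -- greedy gains are nonnegative
  have gain0 : ∀ i, g (w i) ≤ g (w (i+1)) := by
    intro i
    obtain ⟨ℓ, h1, h2⟩ := hwstep i
    rcases (w i).eq_empty_or_nonempty with he | ⟨a, ha⟩
    · rw [he, hg0, h1]; exact hgnn _
    · calc g (w i) = g (insert a (w i)) := by rw [Finset.insert_eq_self.mpr ha]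
        _ ≤ g (insert ℓ (w i)) := h2 a
        _ = g (w (i+1)) := by rw [h1]
  set X : ℝ := g s - ((k:ℝ) - 1) * θ - (k:ℝ) * ε with hX
  -- key per-step inequality
  have hstep : ∀ i, i < k → X - g (w i) ≤ (k:ℝ) * (g (w (i+1)) - g (w i)) := by
    intro i hik
    obtain ⟨ℓ, h1, h2⟩ := hwstep i
    have hgain := gain0 i
    have hm1 : g s - (k:ℝ) * ε ≤ g (s ∪ w i) := by
      have hl := lem1 (w i \ s) s
      rw [Finset.union_sdiff_self_eq_union] at hl
      have hcard : ((w i \ s).card : ℝ) ≤ (k : ℝ) := by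
        exact_mod_cast le_trans (Finset.card_le_card Finset.sdiff_subset)
          (le_trans (cardw i) (le_of_lt hik))
      nlinarith
    rcases (s \ w i).eq_empty_or_nonempty with ht | ht
    · have hsub' : s ⊆ w i := Finset.sdiff_eq_empty_iff_subset.mp ht
      rw [Finset.union_eq_right.mpr hsub'] at hm1
      have hθ' : 0 ≤ ((k:ℝ)-1)*θ := mul_nonneg (by linarith [hk1]) hθ
      nlinarith
    · set t := s \ w i with htdef
      set S := ∑ ℓ' ∈ t, (g (insert ℓ' (w i)) - g (w i)) with hS
      have hmk : (t.card : ℝ) ≤ (k:ℝ) := by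
        have : t.card ≤ s.card := Finset.card_le_card Finset.sdiff_subset
        rw [hs] at this
        exact_mod_cast this
      have hm0 : (0:ℝ) < (t.card : ℝ) := by exact_mod_cast Finset.card_pos.mpr ht
      have hlem2 := lem2 t (w i) ht
      have hwit : w i ∪ t = s ∪ w i := by
        rw [htdef, Finset.union_sdiff_self_eq_union, Finset.union_comm]
      rw [hwit] at hlem2
      -- pick an element with at least average gain
      have havg : ∑ _ ∈ t, (S / (t.card : ℝ)) ≤ ∑ ℓ' ∈ t, (g (insert ℓ' (w i)) - g (w i)) := by
        rw [Finset.sum_const, nsmul_eq_mul, mul_div_cancel₀ _ (ne_of_gt hm0)]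
      obtain ⟨ℓ', hℓ't, hℓ'⟩ := Finset.exists_le_of_sum_le ht havg
      have hbound : S / (t.card : ℝ) ≤ g (w (i+1)) - g (w i) := by
        have := h2 ℓ'
        rw [← h1] at this
        linarith
      have hSle : S ≤ (g (w (i+1)) - g (w i)) * (t.card : ℝ) :=
        (div_le_iff₀ hm0).mp hbound
      have hgainnn : 0 ≤ g (w (i+1)) - g (w i) := by linarith
      nlinarith [mul_le_mul_of_nonneg_left hmk hgainnn]
  -- iterate
  have hone : (0:ℝ) ≤ 1 - 1/(k:ℝ) := by
    have : 1/(k:ℝ) ≤ 1 := by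
      rw [div_le_one hkpos]; exact_mod_cast hk
    linarith
  have hiter : ∀ j, j ≤ k → X - g (w j) ≤ (1 - 1/(k:ℝ))^j * X := by
    intro j
    induction j with
    | zero => intro _; simp [hw0, hg0]
    | succ n ih =>
      intro hnk
      have hn : n < k := hnk
      have h1 := hstep n hn
      have h2 := ih (le_of_lt hn)
      have h1' : (X - g (w n)) / (k:ℝ) ≤ g (w (n+1)) - g (w n) := by
        rw [div_le_iff₀ hkpos]
        nlinarith
      have key : X - g (w (n+1)) ≤ (1 - 1/(k:ℝ)) * (X - g (w n)) := by
        have hr : (1 - 1/(k:ℝ)) * (X - g (w n)) =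
            (X - g (w n)) - (X - g (w n)) / (k:ℝ) := by ring
        rw [hr]
        linarith
      calc X - g (w (n+1)) ≤ (1 - 1/(k:ℝ)) * (X - g (w n)) := key
        _ ≤ (1 - 1/(k:ℝ)) * ((1 - 1/(k:ℝ))^n * X) := mul_le_mul_of_nonneg_left h2 hone
        _ = (1 - 1/(k:ℝ))^(n+1) * X := by ring
  have hfin := hiter k le_rfl
  have hgoal : (1 - (1 - 1/(k:ℝ))^k) * X = X - (1 - 1/(k:ℝ))^k * X := by ring
  rw [hgoal]
  linarith [hfin]
end

section
/- Under the quantitative IIA identity p(ℓ|m,w) = p(ℓ|m,w∪{ℓ'}) + p(ℓ'|m,w∪{ℓ'})·p(ℓ|m,w) (for every type m, set w, and ℓ' ∉ w) and the normalization Σ_{ℓ} p(ℓ|m,w) ≤ 1, the total choice probability is submodular: for any sets w_a ⊆ w_b and item ℓ' ∉ w_b, (Σ_ℓ p(ℓ|m, w_a ∪ {ℓ'}) − Σ_ℓ p(ℓ|m, w_a)) ≥ (Σ_ℓ p(ℓ|m, w_b ∪ {ℓ'}) − Σ_ℓ p(ℓ|m, w_b)). -/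
open Finset

/-- Submodularity of the total choice probability under the quantitative IIA identity:
the marginal gain of adding an item `ℓ'` to a smaller displayed set is at least the
marginal gain of adding it to a larger one. -/
theorem total_choice_submodular {L M : Type*} [Fintype L] [DecidableEq L]
    (p : L → M → Finset L → ℝ)
    (h01 : ∀ (ℓ : L) (m : M) (w : Finset L), 0 ≤ p ℓ m w ∧ p ℓ m w ≤ 1)
    (hsupp : ∀ (ℓ : L) (m : M) (w : Finset L), ℓ ∉ w → p ℓ m w = 0)
    (hsum : ∀ (m : M) (w : Finset L), ∑ ℓ, p ℓ m w ≤ 1)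
    (hIIA : ∀ (m : M) (w : Finset L) (ℓ' : L), ℓ' ∉ w → ∀ ℓ ∈ w,
      p ℓ m w = p ℓ m (insert ℓ' w) + p ℓ' m (insert ℓ' w) * p ℓ m w)
    (m : M) (wa wb : Finset L) (hab : wa ⊆ wb) (ℓ' : L) (hℓ' : ℓ' ∉ wb) :
    (∑ ℓ, p ℓ m (insert ℓ' wb)) - (∑ ℓ, p ℓ m wb)
      ≤ (∑ ℓ, p ℓ m (insert ℓ' wa)) - (∑ ℓ, p ℓ m wa) := by
  -- sums over the whole type equal sums over the support
  have hS : ∀ w : Finset L, ∑ ℓ, p ℓ m w = ∑ ℓ ∈ w, p ℓ m w := by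
    intro w
    rw [← Finset.sum_subset (Finset.subset_univ w)]
    intro x _ hx
    exact hsupp x m w hx
  -- step formula for the total probability
  have hstep : ∀ (w : Finset L) (x : L), x ∉ w →
      ∑ ℓ, p ℓ m (insert x w)
        = p x m (insert x w) + (1 - p x m (insert x w)) * ∑ ℓ, p ℓ m w := by
    intro w x hw
    rw [hS, hS, Finset.sum_insert hw]
    have hcong : ∀ ℓ ∈ w, p ℓ m (insert x w) = (1 - p x m (insert x w)) * p ℓ m w := by
      intro ℓ hl
      have h := hIIA m w x hw ℓ hl
      ring_nf
      ring_nf at h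
      linarith
    rw [Finset.sum_congr rfl hcong, ← Finset.mul_sum]
  -- monotonicity of the total probability
  have hmonoS : ∀ t : Finset L, ∀ w : Finset L, (∀ x ∈ t, x ∉ w) →
      ∑ ℓ, p ℓ m w ≤ ∑ ℓ, p ℓ m (w ∪ t) := by
    intro t
    induction t using Finset.induction_on with
    | empty => intro w _; simp
    | @insert a t ha ih =>
      intro w hdisj
      have haw : a ∉ w := hdisj a (Finset.mem_insert_self a t)
      have haw' : a ∉ w ∪ t := by
        simp [haw, ha]
      have h1 : ∑ ℓ, p ℓ m w ≤ ∑ ℓ, p ℓ m (w ∪ t) :=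
        ih w (fun x hx => hdisj x (Finset.mem_insert_of_mem hx))
      have h2 := hstep (w ∪ t) a haw'
      have hq := (h01 a m (insert a (w ∪ t))).1
      have hsle := hsum m (w ∪ t)
      have heq : w ∪ insert a t = insert a (w ∪ t) := by
        ext x; simp [or_comm, or_left_comm]
      rw [heq, h2]
      nlinarith
  -- antitonicity of the probability of ℓ' itself
  have hmonoq : ∀ t : Finset L, ∀ w : Finset L, ℓ' ∉ w →
      (∀ x ∈ t, x ∉ w ∧ x ≠ ℓ') →
      p ℓ' m (insert ℓ' (w ∪ t)) ≤ p ℓ' m (insert ℓ' w) := by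
    intro t
    induction t using Finset.induction_on with
    | empty => intro w _ _; simp
    | @insert a t ha ih =>
      intro w hw hdisj
      have haw := hdisj a (Finset.mem_insert_self a t)
      have hih : p ℓ' m (insert ℓ' (w ∪ t)) ≤ p ℓ' m (insert ℓ' w) :=
        ih w hw (fun x hx => hdisj x (Finset.mem_insert_of_mem hx))
      have hA : a ∉ insert ℓ' (w ∪ t) := by
        simp [haw.1, haw.2, ha]
      have hmem : ℓ' ∈ insert ℓ' (w ∪ t) := Finset.mem_insert_self _ _
      have h := hIIA m (insert ℓ' (w ∪ t)) a hA ℓ' hmem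
      have hnn : 0 ≤ p a m (insert a (insert ℓ' (w ∪ t))) *
          p ℓ' m (insert ℓ' (w ∪ t)) :=
        mul_nonneg (h01 _ _ _).1 (h01 _ _ _).1
      have heq : insert ℓ' (w ∪ insert a t) = insert a (insert ℓ' (w ∪ t)) := by
        ext x; simp; tauto
      rw [heq]
      linarith
  -- assemble
  have hwb : wb = wa ∪ (wb \ wa) := (Finset.union_sdiff_of_subset hab).symm
  have hℓ'a : ℓ' ∉ wa := fun h => hℓ' (hab h)
  have hSab : ∑ ℓ, p ℓ m wa ≤ ∑ ℓ, p ℓ m wb := by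
    rw [hwb]
    exact hmonoS _ wa (fun x hx => (Finset.mem_sdiff.mp hx).2)
  have hqab : p ℓ' m (insert ℓ' wb) ≤ p ℓ' m (insert ℓ' wa) := by
    rw [hwb]
    exact hmonoq _ wa hℓ'a
      (fun x hx => ⟨(Finset.mem_sdiff.mp hx).2, fun h => hℓ' (h ▸ (Finset.mem_sdiff.mp hx).1)⟩)
  rw [hstep wa ℓ' hℓ'a, hstep wb ℓ' hℓ']
  have hqb := (h01 ℓ' m (insert ℓ' wb)).1
  have hqa := (h01 ℓ' m (insert ℓ' wa)).1
  have h1 := hsum m wa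
  have h2 := hsum m wb
  nlinarith [mul_nonneg hqb (sub_nonneg.mpr hSab),
    mul_nonneg (sub_nonneg.mpr hqab) (sub_nonneg.mpr h1)]
end

section
/- Suppose the type-conditional choice probabilities satisfy the IIA identity and the bound Σ_ℓ p(ℓ|m,w) ≤ 1/B with B ≥ 2. Fix an item ℓ', a belief state c ∈ Δ_M, a set w_a with fewer than k items, and a set w_b ⊇ w_a with k items (ℓ' ∉ w_b). Then Σ_m c(m)·p(ℓ'|m, w_a ∪ {ℓ'})·Σ_ℓ p(ℓ|m, w_a) ≤ Σ_m c(m)·p(ℓ'|m, w_b ∪ {ℓ'})·Σ_ℓ p(ℓ|m, w_b). -/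
open Finset

/-!
Fix a type and write `T(w) = Σ_ℓ p(ℓ|w)`. Adding an item `b` to `w` rescales every old
choice probability by `1 - t`, where `t = p(b|w ∪ {b})`, so `T(w ∪ {b}) = t + (1 - t) T(w)`;
and by IIA `p(ℓ'|w ∪ {b, ℓ'}) = (1 - s) p(ℓ'|w ∪ {ℓ'})` with `s = p(b|w ∪ {b, ℓ'}) ≤ t`.
The one-step inequality thus reduces to `T(w) ≤ (1 - t) T(w ∪ {b})`, which holds as soon as
`T(w ∪ {b}) ≤ 1/2`. Induction over the added items gives monotonicity in `w`, and averaging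
over types preserves it.
-/

lemma le_one_sub_mul_of_add_mul_le_half {t S : ℝ} (ht : 0 ≤ t) (ht1 : t ≤ 1)
    (hhalf : t + (1 - t) * S ≤ 1 / 2) :
    S ≤ (1 - t) * (t + (1 - t) * S) := by
  have hS1 : S ≤ 1 := by
    by_contra! h
    nlinarith [mul_le_mul_of_nonneg_left h.le (sub_nonneg.2 ht1)]
  have hS2 : (2 - t) * S ≤ 1 - t := by nlinarith [mul_le_mul_of_nonneg_left hS1 ht]
  nlinarith [mul_nonneg ht (sub_nonneg.2 hS2)]

-- In the notation above: `q = p(ℓ'|w ∪ {ℓ'})`, `q' = p(ℓ'|w ∪ {b, ℓ'})`, `S = T(w)`,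
-- and `hts`, `hqs` are the IIA identities for adding `ℓ'` to `w ∪ {b}` and `b` to `w ∪ {ℓ'}`.
lemma mul_le_mul_of_iia_relations {q q' s t S : ℝ} (hq : 0 ≤ q) (ht : 0 ≤ t) (ht1 : t ≤ 1)
    (hq' : 0 ≤ q') (hS : 0 ≤ S) (hts : t = s + q' * t) (hqs : q = q' + s * q)
    (hhalf : t + (1 - t) * S ≤ 1 / 2) :
    q * S ≤ q' * (t + (1 - t) * S) := by
  have hq'_eq : q' = (1 - s) * q := by linarith
  have hst : s ≤ t := by nlinarith [mul_nonneg hq' ht]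
  have hT : 0 ≤ t + (1 - t) * S := by nlinarith [mul_nonneg (sub_nonneg.2 ht1) hS]
  calc q * S ≤ q * ((1 - t) * (t + (1 - t) * S)) :=
        mul_le_mul_of_nonneg_left (le_one_sub_mul_of_add_mul_le_half ht ht1 hhalf) hq
    _ ≤ (1 - s) * q * (t + (1 - t) * S) := by
        nlinarith [mul_nonneg (mul_nonneg (sub_nonneg.2 hst) hq) hT]
    _ = q' * (t + (1 - t) * S) := by rw [hq'_eq]

section ChoiceModel

variable {L : Type*} [Fintype L] [DecidableEq L] {P : L → Finset L → ℝ}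

def IsIIA (P : L → Finset L → ℝ) : Prop :=
  ∀ (w : Finset L) (b : L), b ∉ w → ∀ ℓ ∈ w, P ℓ w = P ℓ (insert b w) + P b (insert b w) * P ℓ w

lemma sum_choice_insert (hsupp : ∀ ℓ w, ℓ ∉ w → P ℓ w = 0) (hIIA : IsIIA P) {w : Finset L}
    {b : L} (hb : b ∉ w) :
    ∑ ℓ, P ℓ (insert b w) = P b (insert b w) + (1 - P b (insert b w)) * ∑ ℓ, P ℓ w := by
  have sum_eq_sum_mem : ∀ v : Finset L, ∑ ℓ, P ℓ v = ∑ ℓ ∈ v, P ℓ v := fun v =>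
    (sum_subset (subset_univ v) fun ℓ _ hℓ => hsupp ℓ v hℓ).symm
  rw [sum_eq_sum_mem, sum_eq_sum_mem, sum_insert hb, mul_sum]
  congr 1
  refine sum_congr rfl fun ℓ hℓ => ?_
  linarith [hIIA w b hb ℓ hℓ]

lemma choice_mul_sum_le_insert (hP : ∀ ℓ w, 0 ≤ P ℓ w) (hsupp : ∀ ℓ w, ℓ ∉ w → P ℓ w = 0)
    (hIIA : IsIIA P) (hhalf : ∀ w, ∑ ℓ, P ℓ w ≤ 1 / 2) {w : Finset L} {ℓ' b : L}
    (hℓ' : ℓ' ∉ w) (hb : b ≠ ℓ') :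
    P ℓ' (insert ℓ' w) * ∑ ℓ, P ℓ w ≤ P ℓ' (insert ℓ' (insert b w)) * ∑ ℓ, P ℓ (insert b w) := by
  by_cases hbw : b ∈ w
  · rw [insert_eq_of_mem hbw]
  have hsum := sum_choice_insert hsupp hIIA hbw
  have ht1 : P b (insert b w) ≤ 1 := by
    linarith [hhalf (insert b w), single_le_sum (fun ℓ _ => hP ℓ (insert b w)) (mem_univ b)]
  have hts := hIIA (insert b w) ℓ' (by simp [hℓ', hb.symm]) b (mem_insert_self b w)
  have hqs := hIIA (insert ℓ' w) b (by simp [hbw, hb]) ℓ' (mem_insert_self ℓ' w)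
  rw [insert_comm b ℓ'] at hqs
  rw [hsum]
  exact mul_le_mul_of_iia_relations (hP _ _) (hP _ _) ht1 (hP _ _)
    (sum_nonneg fun ℓ _ => hP ℓ w) hts hqs (hsum ▸ hhalf (insert b w))

lemma choice_mul_sum_mono (hP : ∀ ℓ w, 0 ≤ P ℓ w) (hsupp : ∀ ℓ w, ℓ ∉ w → P ℓ w = 0)
    (hIIA : IsIIA P) (hhalf : ∀ w, ∑ ℓ, P ℓ w ≤ 1 / 2) {w w' : Finset L} {ℓ' : L}
    (hw : w ⊆ w') (hℓ' : ℓ' ∉ w') :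
    P ℓ' (insert ℓ' w) * ∑ ℓ, P ℓ w ≤ P ℓ' (insert ℓ' w') * ∑ ℓ, P ℓ w' := by
  suffices key : ∀ v : Finset L, ℓ' ∉ w ∪ v →
      P ℓ' (insert ℓ' w) * ∑ ℓ, P ℓ w ≤ P ℓ' (insert ℓ' (w ∪ v)) * ∑ ℓ, P ℓ (w ∪ v) by
    simpa only [union_eq_right.2 hw] using key w' (by rwa [union_eq_right.2 hw])
  intro v
  induction v using Finset.induction_on with
  | empty => simp
  | insert b v _ ih =>
    intro hv
    rw [union_insert, mem_insert, not_or] at hv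
    rw [union_insert]
    exact (ih hv.2).trans (choice_mul_sum_le_insert hP hsupp hIIA hhalf hv.2 (Ne.symm hv.1))

end ChoiceModel

theorem theta_bound_general {L M : Type*} [Fintype L] [Fintype M] [DecidableEq L]
    (p : L → M → Finset L → ℝ) (B : ℝ) (hB : 2 ≤ B)
    (h01 : ∀ (ℓ : L) (m : M) (w : Finset L), 0 ≤ p ℓ m w ∧ p ℓ m w ≤ 1)
    (hsupp : ∀ (ℓ : L) (m : M) (w : Finset L), ℓ ∉ w → p ℓ m w = 0)
    (hIIA : ∀ (m : M) (w : Finset L) (ℓ' : L), ℓ' ∉ w → ∀ ℓ ∈ w,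
      p ℓ m w = p ℓ m (insert ℓ' w) + p ℓ' m (insert ℓ' w) * p ℓ m w)
    (hsum : ∀ (m : M) (w : Finset L), ∑ ℓ, p ℓ m w ≤ 1 / B)
    (c : M → ℝ) (hc0 : ∀ m, 0 ≤ c m)
    (ℓ' : L) (wa wb : Finset L) (hab : wa ⊆ wb)
    (hℓ' : ℓ' ∉ wb) :
    ∑ m, c m * p ℓ' m (insert ℓ' wa) * (∑ ℓ, p ℓ m wa)
      ≤ ∑ m, c m * p ℓ' m (insert ℓ' wb) * (∑ ℓ, p ℓ m wb) := by
  have hB_inv : 1 / B ≤ 1 / 2 := one_div_le_one_div_of_le two_pos hB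
  refine sum_le_sum fun m _ => ?_
  simp only [mul_assoc]
  exact mul_le_mul_of_nonneg_left
    (choice_mul_sum_mono (fun ℓ w => (h01 ℓ m w).1) (fun ℓ w => hsupp ℓ m w) (hIIA m)
      (fun w => (hsum m w).trans hB_inv) hab hℓ') (hc0 m)

/-- Larger displayed sets incur a larger submodularity defect: for `w_a ⊆ w_b` with
`|w_a| < k`, `|w_b| = k`, under the IIA identity and the bound `Σ_ℓ p(ℓ|m,w) ≤ 1/B`
with `B ≥ 2`,
`Σ_m c(m) p(ℓ'|m, w_a ∪ {ℓ'}) Σ_ℓ p(ℓ|m, w_a) ≤ Σ_m c(m) p(ℓ'|m, w_b ∪ {ℓ'}) Σ_ℓ p(ℓ|m, w_b)`. -/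
theorem theta_bound {L M : Type*} [Fintype L] [Fintype M] [DecidableEq L]
    (p : L → M → Finset L → ℝ) (B : ℝ) (hB : 2 ≤ B)
    (h01 : ∀ (ℓ : L) (m : M) (w : Finset L), 0 ≤ p ℓ m w ∧ p ℓ m w ≤ 1)
    (hsupp : ∀ (ℓ : L) (m : M) (w : Finset L), ℓ ∉ w → p ℓ m w = 0)
    (hIIA : ∀ (m : M) (w : Finset L) (ℓ' : L), ℓ' ∉ w → ∀ ℓ ∈ w,
      p ℓ m w = p ℓ m (insert ℓ' w) + p ℓ' m (insert ℓ' w) * p ℓ m w)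
    (hsum : ∀ (m : M) (w : Finset L), ∑ ℓ, p ℓ m w ≤ 1 / B)
    (c : M → ℝ) (hc0 : ∀ m, 0 ≤ c m) (hc1 : ∑ m, c m = 1)
    (k : ℕ) (ℓ' : L) (wa wb : Finset L) (hab : wa ⊆ wb)
    (hwa : wa.card < k) (hwb : wb.card = k) (hℓ' : ℓ' ∉ wb) :
    ∑ m, c m * p ℓ' m (insert ℓ' wa) * (∑ ℓ, p ℓ m wa)
      ≤ ∑ m, c m * p ℓ' m (insert ℓ' wb) * (∑ ℓ, p ℓ m wb) :=
  theta_bound_general p B hB h01 hsupp hIIA hsum c hc0 ℓ' wa wb hab hℓ'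
end

section
/- Fix states c¹, c² ∈ Δ_M and positive constants A₁, B₂ with A₁·c¹(m) ≥ B₂·c²(m) for all types m. Then the greedy value iterates with zero initialization satisfy A₁·V^t_greedy(c¹) ≥ B₂·V^t_greedy(c²) for every t ≥ 0. -/
/-!
Extend `Vᵗ` to all nonnegative weight vectors. Scaling the prior leaves every posterior
unchanged, so `Vᵗ` is positively homogeneous and the claim becomes monotonicity:
`B₂ • c² ≤ A₁ • c¹` implies `Vᵗ(B₂ • c²) ≤ Vᵗ(A₁ • c¹)`. By homogeneity the `ℓ`-th term of
`Q(w, c)` equals `Dₗ + γ Vᵗ⁻¹(p(ℓ|·,w) c)` with `Dₗ = Σₘ p(ℓ|m,w) c(m)`, and both parts are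
monotone in `c` (the second by induction on `t`).
-/

open Finset

/-- Bayesian posterior belief after item `ℓ` is chosen from displayed set `w`. -/
noncomputable def post {M L : Type*} [Fintype M] (p : L → M → Finset L → ℝ)
    (c : M → ℝ) (ℓ : L) (w : Finset L) : M → ℝ :=
  fun m' => p ℓ m' w * c m' / (∑ m, p ℓ m w * c m)

/-- The Q-function associated to a value function `V`. -/
noncomputable def Qfun {M L : Type*} [Fintype M] [Fintype L] (p : L → M → Finset L → ℝ)
    (γ : ℝ) (V : (M → ℝ) → ℝ) (w : Finset L) (c : M → ℝ) : ℝ :=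
  ∑ m, ∑ ℓ, c m * p ℓ m w * (1 + γ * V (post p c ℓ w))

/-- Greedy value iteration: `V⁰ = 0` and `Vᵗ(c) = max_{w ∈ G} Q_{Vᵗ⁻¹}(w, c)`. -/
noncomputable def Vg {M L : Type*} [Fintype M] [Fintype L] (p : L → M → Finset L → ℝ)
    (γ : ℝ) (G : Finset (Finset L)) (hG : G.Nonempty) : ℕ → (M → ℝ) → ℝ
  | 0 => fun _ => 0
  | t + 1 => fun c => G.sup' hG (fun w => Qfun p γ (Vg p γ G hG t) w c)

section

variable {M L : Type*} [Fintype M] (p : L → M → Finset L → ℝ)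

lemma post_smul {a : ℝ} (ha : a ≠ 0) (c : M → ℝ) (ℓ : L) (w : Finset L) :
    post p (a • c) ℓ w = post p c ℓ w := by
  funext m
  simp only [post, Pi.smul_apply, smul_eq_mul, mul_left_comm _ a, ← mul_sum]
  exact mul_div_mul_left _ _ ha

lemma Qfun_smul [Fintype L] (γ : ℝ) (V : (M → ℝ) → ℝ) (w : Finset L) (a : ℝ)
    (c : M → ℝ) :
    Qfun p γ V w (a • c) = a * Qfun p γ V w c := by
  rcases eq_or_ne a 0 with rfl | ha
  · simp [Qfun]
  · simp only [Qfun, post_smul p ha, Pi.smul_apply, smul_eq_mul, mul_sum, mul_assoc]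

lemma Vg_smul [Fintype L] (γ : ℝ) (G : Finset (Finset L)) (hG : G.Nonempty) {a : ℝ}
    (ha : 0 ≤ a) (t : ℕ) (c : M → ℝ) : Vg p γ G hG t (a • c) = a * Vg p γ G hG t c := by
  cases t with
  | zero => simp [Vg]
  | succ t => simp only [Vg, Qfun_smul, mul₀_sup' ha]

/-- When the normalizer vanishes so does every joint weight, so the division by zero in `post`
is harmless. -/
lemma sum_mul_smul_post {ℓ : L} {w : Finset L} (hp : ∀ m, 0 ≤ p ℓ m w) {c : M → ℝ}
    (hc : 0 ≤ c) : (∑ m, p ℓ m w * c m) • post p c ℓ w = fun m => p ℓ m w * c m := by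
  funext m
  simp only [post, Pi.smul_apply, smul_eq_mul]
  rcases eq_or_ne (∑ m, p ℓ m w * c m) 0 with hD | hD
  · rw [hD, zero_mul, eq_comm]
    exact (sum_eq_zero_iff_of_nonneg fun m _ => mul_nonneg (hp m) (hc m)).mp hD m
      (mem_univ m)
  · exact mul_div_cancel₀ _ hD

lemma Qfun_eq_sum_joint [Fintype L] (γ : ℝ) {V : (M → ℝ) → ℝ}
    (hV : ∀ a : ℝ, 0 ≤ a → ∀ c, V (a • c) = a * V c)
    {w : Finset L} (hp : ∀ ℓ m, 0 ≤ p ℓ m w) {c : M → ℝ} (hc : 0 ≤ c) :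
    Qfun p γ V w c =
      ∑ ℓ, (∑ m, p ℓ m w * c m + γ * V (fun m => p ℓ m w * c m)) := by
  rw [Qfun, sum_comm]
  refine sum_congr rfl fun ℓ _ => ?_
  have hD : 0 ≤ ∑ m, p ℓ m w * c m := sum_nonneg fun m _ => mul_nonneg (hp ℓ m) (hc m)
  rw [← sum_mul, mul_add, mul_one, mul_left_comm _ γ]
  simp only [mul_comm (c _)]
  rw [← hV _ hD, sum_mul_smul_post p (hp ℓ) hc]

lemma Vg_mono [Fintype L] (γ : ℝ) (hγ : 0 ≤ γ) (G : Finset (Finset L)) (hG : G.Nonempty)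
    (hp : ∀ ℓ m w, 0 ≤ p ℓ m w) (t : ℕ) {x y : M → ℝ} (hy : 0 ≤ y) (hyx : y ≤ x) :
    Vg p γ G hG t y ≤ Vg p γ G hG t x := by
  induction t generalizing x y with
  | zero => rfl
  | succ t ih =>
    have hV : ∀ a : ℝ, 0 ≤ a → ∀ c, Vg p γ G hG t (a • c) = a * Vg p γ G hG t c :=
      fun a ha => Vg_smul p γ G hG ha t
    have hQ : ∀ w, Qfun p γ (Vg p γ G hG t) w y ≤ Qfun p γ (Vg p γ G hG t) w x := by
      intro w
      have hjoint : ∀ ℓ, (fun m => p ℓ m w * y m) ≤ fun m => p ℓ m w * x m :=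
        fun ℓ m => mul_le_mul_of_nonneg_left (hyx m) (hp ℓ m w)
      rw [Qfun_eq_sum_joint p γ hV (hp · · w) hy,
        Qfun_eq_sum_joint p γ hV (hp · · w) (hy.trans hyx)]
      refine sum_le_sum fun ℓ _ => add_le_add ?_ ?_
      · exact sum_le_sum fun m _ => hjoint ℓ m
      · exact mul_le_mul_of_nonneg_left
          (ih (fun m => mul_nonneg (hp ℓ m w) (hy m)) (hjoint ℓ)) hγ
    exact sup'_le hG _ fun w hw =>
      (hQ w).trans (le_sup' (fun w => Qfun p γ (Vg p γ G hG t) w x) hw)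

end

theorem greedy_value_scaled_monotone_general {M L : Type*} [Fintype M] [Fintype L]
    (p : L → M → Finset L → ℝ) (γ : ℝ) (hγ : 0 ≤ γ)
    (G : Finset (Finset L)) (hG : G.Nonempty)
    (hp : ∀ (ℓ : L) (m : M) (w : Finset L), 0 ≤ p ℓ m w ∧ p ℓ m w ≤ 1)
    (c₁ c₂ : M → ℝ)
    (hc₂ : (∀ m, 0 ≤ c₂ m) ∧ ∑ m, c₂ m = 1)
    (A₁ B₂ : ℝ) (hA₁ : 0 < A₁) (hB₂ : 0 < B₂)
    (hAB : ∀ m, B₂ * c₂ m ≤ A₁ * c₁ m) (t : ℕ) :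
    B₂ * Vg p γ G hG t c₂ ≤ A₁ * Vg p γ G hG t c₁ := by
  calc B₂ * Vg p γ G hG t c₂ = Vg p γ G hG t (B₂ • c₂) :=
        (Vg_smul p γ G hG hB₂.le t c₂).symm
    _ ≤ Vg p γ G hG t (A₁ • c₁) :=
        Vg_mono p γ hγ G hG (fun ℓ m w => (hp ℓ m w).1) t (smul_nonneg hB₂.le hc₂.1) hAB
    _ = A₁ * Vg p γ G hG t c₁ := Vg_smul p γ G hG hA₁.le t c₁

/-- Scaled monotonicity of the greedy value iterates over the belief simplex:
if `A₁ c¹ ≥ B₂ c²` componentwise then `A₁ Vᵗ(c¹) ≥ B₂ Vᵗ(c²)`. -/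
theorem greedy_value_scaled_monotone {M L : Type*} [Fintype M] [Fintype L]
    (p : L → M → Finset L → ℝ) (γ : ℝ) (hγ : 0 ≤ γ)
    (G : Finset (Finset L)) (hG : G.Nonempty)
    (hp : ∀ (ℓ : L) (m : M) (w : Finset L), 0 ≤ p ℓ m w ∧ p ℓ m w ≤ 1)
    (c₁ c₂ : M → ℝ)
    (hc₁ : (∀ m, 0 ≤ c₁ m) ∧ ∑ m, c₁ m = 1)
    (hc₂ : (∀ m, 0 ≤ c₂ m) ∧ ∑ m, c₂ m = 1)
    (A₁ B₂ : ℝ) (hA₁ : 0 < A₁) (hB₂ : 0 < B₂)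
    (hAB : ∀ m, B₂ * c₂ m ≤ A₁ * c₁ m) (t : ℕ) :
    B₂ * Vg p γ G hG t c₂ ≤ A₁ * Vg p γ G hG t c₁ :=
  greedy_value_scaled_monotone_general p γ hγ G hG hp c₁ c₂ hc₂ A₁ B₂ hA₁ hB₂ hAB t
end

section
/- Under the IIA identity and the bound Σ_ℓ p(ℓ|c,w) ≤ 1/B with B ≥ 1 + γ, the greedy Q-function with zero-initialized value iteration is monotone in the action set: for every state c, set w, item ℓ' ∉ w and t ≥ 0, Q^t_greedy(w ∪ {ℓ'}, c) ≥ Q^t_greedy(w, c). -/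
open Finset

/-! Read `V` on unnormalised beliefs `x ≥ 0`, i.e. through its homogeneous extension
`x ↦ (Σ x) V(x / Σ x)`. Greedy value iteration preserves the invariant that this extension is
nonnegative, positively homogeneous, subadditive (convexity of `V` on beliefs) and bounded by
`K Σ x`; for `K = 1` the bound is preserved because `1 + γ ≤ B`. In these terms
`Q(w, c) = Σ_ℓ (Σ y_ℓ + γ V y_ℓ)` with `y_ℓ = p(ℓ|·,w) c`. Adding `ℓ'` gains `Σ z` for
`z = p(ℓ'|·,w ∪ {ℓ'}) c`, while by IIA each old `y_ℓ` loses exactly `p(ℓ|·,w) z`: a total mass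
of at most `Σ z / B`, each unit of which costs at most `1 + γ`. -/

structure IsBoundedSublinear {M : Type*} [Fintype M] (K : ℝ) (V : (M → ℝ) → ℝ) : Prop where
  nonneg : ∀ x, 0 ≤ x → 0 ≤ V x
  map_smul : ∀ (r : ℝ) x, 0 ≤ r → 0 ≤ x → V (r • x) = r * V x
  map_add_le : ∀ x y, 0 ≤ x → 0 ≤ y → V (x + y) ≤ V x + V y
  le_mul_sum : ∀ x, 0 ≤ x → V x ≤ K * ∑ m, x m

namespace IsBoundedSublinear

variable {M : Type*} [Fintype M] {K : ℝ} {V : (M → ℝ) → ℝ}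

theorem map_zero (hV : IsBoundedSublinear K V) : V 0 = 0 := by
  simpa using hV.map_smul 0 0 le_rfl le_rfl

protected theorem zero (hK : 0 ≤ K) : IsBoundedSublinear K fun _ : M → ℝ => (0 : ℝ) where
  nonneg _ _ := le_rfl
  map_smul r _ _ _ := (mul_zero r).symm
  map_add_le _ _ _ _ := (add_zero 0).ge
  le_mul_sum _ hx := mul_nonneg hK (sum_nonneg fun m _ => hx m)

theorem sup' {ι : Type*} {s : Finset ι} (hs : s.Nonempty) {f : ι → (M → ℝ) → ℝ}
    (hf : ∀ i ∈ s, IsBoundedSublinear K (f i)) :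
    IsBoundedSublinear K fun x => s.sup' hs fun i => f i x where
  nonneg x hx := by
    obtain ⟨i, hi⟩ := hs
    exact le_sup'_of_le _ hi ((hf i hi).nonneg x hx)
  map_smul r x hr hx := by
    rw [mul₀_sup' hr]
    exact sup'_congr hs rfl fun i hi => (hf i hi).map_smul r x hr hx
  map_add_le x y hx hy := sup'_le _ _ fun i hi =>
    ((hf i hi).map_add_le x y hx hy).trans (add_le_add (le_sup' (f · x) hi) (le_sup' (f · y) hi))
  le_mul_sum x hx := sup'_le _ _ fun i hi => (hf i hi).le_mul_sum x hx

end IsBoundedSublinear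

def itemValue {M : Type*} [Fintype M] (γ : ℝ) (V : (M → ℝ) → ℝ) (y : M → ℝ) : ℝ :=
  ∑ m, y m + γ * V y

section itemValue

variable {M : Type*} [Fintype M] {γ K : ℝ} {V : (M → ℝ) → ℝ}

theorem isBoundedSublinear_itemValue (hV : IsBoundedSublinear K V) (hγ : 0 ≤ γ) :
    IsBoundedSublinear (1 + γ * K) (itemValue γ V) where
  nonneg y hy := add_nonneg (sum_nonneg fun m _ => hy m) (mul_nonneg hγ (hV.nonneg y hy))
  map_smul r y hr hy := by
    simp only [itemValue, hV.map_smul r y hr hy, Pi.smul_apply, smul_eq_mul, ← mul_sum]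
    ring
  map_add_le y z hy hz := by
    have := mul_le_mul_of_nonneg_left (hV.map_add_le y z hy hz) hγ
    simp only [itemValue, Pi.add_apply, sum_add_distrib]
    linarith
  le_mul_sum y hy := by
    have := mul_le_mul_of_nonneg_left (hV.le_mul_sum y hy) hγ
    simp only [itemValue]
    linarith

theorem sum_le_itemValue (hV : IsBoundedSublinear K V) (hγ : 0 ≤ γ) {y : M → ℝ} (hy : 0 ≤ y) :
    ∑ m, y m ≤ itemValue γ V y :=
  le_add_of_nonneg_right (mul_nonneg hγ (hV.nonneg y hy))

end itemValue

theorem sum_le_of_forall_mixture_le {M L : Type*} [Fintype M] [Fintype L] {q : L → M → ℝ} {b : ℝ}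
    (h : ∀ c : M → ℝ, 0 ≤ c → ∑ m, c m = 1 → ∑ ℓ, ∑ m, c m * q ℓ m ≤ b) (m : M) :
    ∑ ℓ, q ℓ m ≤ b := by
  classical
  simpa [Pi.single_apply] using h (Pi.single m 1) (Pi.single_nonneg.2 zero_le_one) (by simp)

theorem sum_sum_mul_le {M L : Type*} [Fintype M] [Fintype L] {q : L → M → ℝ} {b : ℝ}
    (hq : ∀ m, ∑ ℓ, q ℓ m ≤ b) {x : M → ℝ} (hx : 0 ≤ x) :
    ∑ ℓ, ∑ m, q ℓ m * x m ≤ b * ∑ m, x m := by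
  rw [sum_comm, mul_sum]
  gcongr with m
  rw [← sum_mul]
  exact mul_le_mul_of_nonneg_right (hq m) (hx m)

section Qfun

variable {M L : Type*} [Fintype M] {p : L → M → Finset L → ℝ} {γ K B : ℝ}
  {V : (M → ℝ) → ℝ}

/-- Homogeneity of `V` absorbs the normalisation of the posterior, also at mass zero, where
`post` takes the junk value `0`. -/
theorem mul_apply_post (hV : IsBoundedSublinear K V) (hp : ∀ ℓ m w, 0 ≤ p ℓ m w)
    {c : M → ℝ} (hc : 0 ≤ c) (ℓ : L) (w : Finset L) :
    (∑ m, p ℓ m w * c m) * V (post p c ℓ w) = V ((p ℓ · w) * c) := by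
  have hy : 0 ≤ (p ℓ · w) * c := mul_nonneg (hp ℓ · w) hc
  have hpost : post p c ℓ w = (∑ m, p ℓ m w * c m)⁻¹ • ((p ℓ · w) * c) := by
    ext m
    simp [post, div_eq_inv_mul]
  rcases (show 0 ≤ ∑ m, p ℓ m w * c m from sum_nonneg fun m _ => hy m).eq_or_lt with hZ | hZ
  · have hy0 : (p ℓ · w) * c = 0 := (Fintype.sum_eq_zero_iff_of_nonneg hy).1 hZ.symm
    rw [← hZ, zero_mul, hy0, hV.map_zero]
  · rw [hpost, hV.map_smul _ _ (inv_nonneg.2 hZ.le) hy, mul_inv_cancel_left₀ hZ.ne']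

variable [Fintype L]

theorem qfun_eq_sum_itemValue (hV : IsBoundedSublinear K V) (hp : ∀ ℓ m w, 0 ≤ p ℓ m w)
    {c : M → ℝ} (hc : 0 ≤ c) (w : Finset L) :
    Qfun p γ V w c = ∑ ℓ, itemValue γ V ((p ℓ · w) * c) := by
  rw [Qfun, sum_comm]
  refine sum_congr rfl fun ℓ _ => ?_
  rw [← sum_mul, itemValue, ← mul_apply_post hV hp hc]
  simp only [Pi.mul_apply, mul_comm (c _)]
  ring

theorem qfun_eq_sum_itemValue_of_support (hV : IsBoundedSublinear K V) (hγ : 0 ≤ γ)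
    (hp : ∀ ℓ m w, 0 ≤ p ℓ m w) (hsupp : ∀ ℓ m w, ℓ ∉ w → p ℓ m w = 0)
    {c : M → ℝ} (hc : 0 ≤ c) (w : Finset L) :
    Qfun p γ V w c = ∑ ℓ ∈ w, itemValue γ V ((p ℓ · w) * c) := by
  rw [qfun_eq_sum_itemValue hV hp hc]
  refine (sum_subset (subset_univ w) fun ℓ _ hℓ => ?_).symm
  have : (p ℓ · w) * c = 0 := by
    ext m
    simp [hsupp ℓ m w hℓ]
  rw [this, (isBoundedSublinear_itemValue hV hγ).map_zero]

theorem isBoundedSublinear_qfun (hV : IsBoundedSublinear K V) (hγ : 0 ≤ γ) (hK0 : 0 ≤ K)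
    (hB : 0 < B) (hK : 1 + γ * K ≤ B * K) (hp : ∀ ℓ m w, 0 ≤ p ℓ m w)
    (hpB : ∀ m w, ∑ ℓ, p ℓ m w ≤ 1 / B) (w : Finset L) :
    IsBoundedSublinear K (Qfun p γ V w) := by
  have hf := isBoundedSublinear_itemValue hV hγ
  refine ⟨fun x hx => ?_, fun r x hr hx => ?_, fun x y hx hy => ?_, fun x hx => ?_⟩
  · rw [qfun_eq_sum_itemValue hV hp hx]
    exact sum_nonneg fun ℓ _ => hf.nonneg _ (mul_nonneg (hp ℓ · w) hx)
  · rw [qfun_eq_sum_itemValue hV hp hx, qfun_eq_sum_itemValue hV hp (smul_nonneg hr hx), mul_sum]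
    refine sum_congr rfl fun ℓ _ => ?_
    rw [mul_smul_comm, hf.map_smul r _ hr (mul_nonneg (hp ℓ · w) hx)]
  · rw [qfun_eq_sum_itemValue hV hp hx, qfun_eq_sum_itemValue hV hp hy,
      qfun_eq_sum_itemValue hV hp (add_nonneg hx hy), ← sum_add_distrib]
    refine sum_le_sum fun ℓ _ => ?_
    rw [mul_add]
    exact hf.map_add_le _ _ (mul_nonneg (hp ℓ · w) hx) (mul_nonneg (hp ℓ · w) hy)
  · rw [qfun_eq_sum_itemValue hV hp hx]
    calc ∑ ℓ, itemValue γ V ((p ℓ · w) * x)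
        ≤ ∑ ℓ, (1 + γ * K) * ∑ m, p ℓ m w * x m :=
          sum_le_sum fun ℓ _ => hf.le_mul_sum _ (mul_nonneg (hp ℓ · w) hx)
      _ ≤ (1 + γ * K) * (1 / B * ∑ m, x m) := by
          rw [← mul_sum]
          exact mul_le_mul_of_nonneg_left (sum_sum_mul_le (hpB · w) hx) (by positivity)
      _ ≤ K * ∑ m, x m := by
          rw [← mul_assoc]
          refine mul_le_mul_of_nonneg_right ?_ (sum_nonneg fun m _ => hx m)
          rw [mul_one_div, div_le_iff₀ hB, mul_comm K]
          exact hK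

theorem isBoundedSublinear_vg (hγ : 0 ≤ γ) (hK0 : 0 ≤ K) (hB : 0 < B) (hK : 1 + γ * K ≤ B * K)
    (hp : ∀ ℓ m w, 0 ≤ p ℓ m w) (hpB : ∀ m w, ∑ ℓ, p ℓ m w ≤ 1 / B)
    (G : Finset (Finset L)) (hG : G.Nonempty) :
    ∀ t, IsBoundedSublinear K (Vg p γ G hG t)
  | 0 => IsBoundedSublinear.zero hK0
  | t + 1 => IsBoundedSublinear.sup' hG fun w _ =>
      isBoundedSublinear_qfun (isBoundedSublinear_vg hγ hK0 hB hK hp hpB G hG t) hγ hK0 hB hK hp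
        hpB w

theorem qfun_le_qfun_insert [DecidableEq L] (hV : IsBoundedSublinear K V) (hγ : 0 ≤ γ)
    (hB : 0 < B) (hKB : 1 + γ * K ≤ B) (hp : ∀ ℓ m w, 0 ≤ p ℓ m w)
    (hsupp : ∀ ℓ m w, ℓ ∉ w → p ℓ m w = 0)
    (hIIA : ∀ m w ℓ', ℓ' ∉ w → ∀ ℓ ∈ w,
      p ℓ m w = p ℓ m (insert ℓ' w) + p ℓ' m (insert ℓ' w) * p ℓ m w)
    (hpB : ∀ m w, ∑ ℓ, p ℓ m w ≤ 1 / B) {c : M → ℝ} (hc : 0 ≤ c) {w : Finset L} {ℓ' : L}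
    (hℓ' : ℓ' ∉ w) :
    Qfun p γ V w c ≤ Qfun p γ V (insert ℓ' w) c := by
  set w' := insert ℓ' w
  set f := itemValue γ V
  have hf := isBoundedSublinear_itemValue hV hγ
  set z := (p ℓ' · w') * c
  have hz : 0 ≤ z := mul_nonneg (hp ℓ' · w') hc
  have hsplit : ∀ ℓ ∈ w,
      f ((p ℓ · w) * c) ≤ f ((p ℓ · w') * c) + (1 + γ * K) * ∑ m, p ℓ m w * z m := by
    intro ℓ hℓ
    have hdecomp : (p ℓ · w) * c = (p ℓ · w') * c + (p ℓ · w) * z := by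
      ext m
      simp only [Pi.add_apply, Pi.mul_apply, z]
      linear_combination c m * hIIA m w ℓ' hℓ' ℓ hℓ
    rw [hdecomp]
    exact (hf.map_add_le _ _ (mul_nonneg (hp ℓ · w') hc) (mul_nonneg (hp ℓ · w) hz)).trans
      (add_le_add le_rfl (hf.le_mul_sum _ (mul_nonneg (hp ℓ · w) hz)))
  have hloss : (1 + γ * K) * ∑ ℓ ∈ w, ∑ m, p ℓ m w * z m ≤ ∑ m, z m := by
    have hmass : ∑ ℓ ∈ w, ∑ m, p ℓ m w * z m ≤ 1 / B * ∑ m, z m :=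
      (sum_le_univ_sum_of_nonneg fun ℓ => sum_nonneg fun m _ => mul_nonneg (hp ℓ m w) (hz m)).trans
        (sum_sum_mul_le (hpB · w) hz)
    calc (1 + γ * K) * ∑ ℓ ∈ w, ∑ m, p ℓ m w * z m
        ≤ B * (1 / B * ∑ m, z m) := mul_le_mul hKB hmass (sum_nonneg fun ℓ _ =>
          sum_nonneg fun m _ => mul_nonneg (hp ℓ m w) (hz m)) hB.le
      _ = ∑ m, z m := by field_simp
  rw [qfun_eq_sum_itemValue_of_support hV hγ hp hsupp hc,
    qfun_eq_sum_itemValue_of_support hV hγ hp hsupp hc, sum_insert hℓ']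
  calc ∑ ℓ ∈ w, f ((p ℓ · w) * c)
      ≤ ∑ ℓ ∈ w, f ((p ℓ · w') * c) + (1 + γ * K) * ∑ ℓ ∈ w, ∑ m, p ℓ m w * z m := by
        rw [mul_sum, ← sum_add_distrib]
        exact sum_le_sum hsplit
    _ ≤ ∑ ℓ ∈ w, f ((p ℓ · w') * c) + f z :=
        add_le_add le_rfl (hloss.trans (sum_le_itemValue hV hγ hz))
    _ = f z + ∑ ℓ ∈ w, f ((p ℓ · w') * c) := add_comm _ _

end Qfun

theorem greedy_Q_monotone_general {M L : Type*} [Fintype M] [Fintype L] [DecidableEq L]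
    (p : L → M → Finset L → ℝ) (γ B : ℝ) (hγ : 0 ≤ γ) (hB : 1 + γ ≤ B)
    (G : Finset (Finset L)) (hG : G.Nonempty)
    (hp : ∀ (ℓ : L) (m : M) (w : Finset L), 0 ≤ p ℓ m w ∧ p ℓ m w ≤ 1)
    (hsupp : ∀ (ℓ : L) (m : M) (w : Finset L), ℓ ∉ w → p ℓ m w = 0)
    (hIIA : ∀ (m : M) (w : Finset L) (ℓ' : L), ℓ' ∉ w → ∀ ℓ ∈ w,
      p ℓ m w = p ℓ m (insert ℓ' w) + p ℓ' m (insert ℓ' w) * p ℓ m w)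
    (hsum : ∀ (c : M → ℝ), (∀ m, 0 ≤ c m) → (∑ m, c m) = 1 →
      ∀ w : Finset L, ∑ ℓ, ∑ m, c m * p ℓ m w ≤ 1 / B)
    (t : ℕ) (c : M → ℝ) (hc0 : ∀ m, 0 ≤ c m)
    (w : Finset L) (ℓ' : L) (hℓ' : ℓ' ∉ w) :
    Qfun p γ (Vg p γ G hG t) w c ≤ Qfun p γ (Vg p γ G hG t) (insert ℓ' w) c := by
  have hB0 : 0 < B := by linarith
  have hp0 : ∀ ℓ m w, 0 ≤ p ℓ m w := fun ℓ m w => (hp ℓ m w).1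
  have hpB : ∀ m w, ∑ ℓ, p ℓ m w ≤ 1 / B := fun m w =>
    sum_le_of_forall_mixture_le (fun c hc0 hc1 => hsum c hc0 hc1 w) m
  have hV : IsBoundedSublinear 1 (Vg p γ G hG t) :=
    isBoundedSublinear_vg hγ zero_le_one hB0 (by linarith) hp0 hpB G hG t
  exact qfun_le_qfun_insert hV hγ hB0 (by linarith) hp0 hsupp hIIA hpB hc0 hℓ'

/-- Monotonicity of the greedy Q-function in the action set: under the IIA identity and
the bound `Σ_ℓ p(ℓ|c,w) ≤ 1/B` with `B ≥ 1 + γ`, adding an item to the displayed set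
does not decrease the Q-value. -/
theorem greedy_Q_monotone {M L : Type*} [Fintype M] [Fintype L] [DecidableEq L]
    (p : L → M → Finset L → ℝ) (γ B : ℝ) (hγ : 0 ≤ γ) (hB : 1 + γ ≤ B)
    (G : Finset (Finset L)) (hG : G.Nonempty)
    (hp : ∀ (ℓ : L) (m : M) (w : Finset L), 0 ≤ p ℓ m w ∧ p ℓ m w ≤ 1)
    (hsupp : ∀ (ℓ : L) (m : M) (w : Finset L), ℓ ∉ w → p ℓ m w = 0)
    (hIIA : ∀ (m : M) (w : Finset L) (ℓ' : L), ℓ' ∉ w → ∀ ℓ ∈ w,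
      p ℓ m w = p ℓ m (insert ℓ' w) + p ℓ' m (insert ℓ' w) * p ℓ m w)
    (hsum : ∀ (c : M → ℝ), (∀ m, 0 ≤ c m) → (∑ m, c m) = 1 →
      ∀ w : Finset L, ∑ ℓ, ∑ m, c m * p ℓ m w ≤ 1 / B)
    (t : ℕ) (c : M → ℝ) (hc0 : ∀ m, 0 ≤ c m) (hc1 : ∑ m, c m = 1)
    (w : Finset L) (ℓ' : L) (hℓ' : ℓ' ∉ w) :
    Qfun p γ (Vg p γ G hG t) w c ≤ Qfun p γ (Vg p γ G hG t) (insert ℓ' w) c :=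
  greedy_Q_monotone_general p γ B hγ hB G hG hp hsupp hIIA hsum t c hc0 w ℓ' hℓ'
end

section
/- Let ρ ∈ [0,1], γ ∈ (0,1], and consider an MDP where the optimal Bellman operator T satisfies (T^t V)(c) ≥ Σ_{i=1}^{t} γ^{i−1} ρ(c)^i for the zero-initialized V, where ρ(c) = max_w Σ_m Σ_ℓ c(m)p(ℓ|m,w) is the best one-step continuation probability. In particular, fixing the action w̃ achieving ρ(c) at every state yields, by induction, (T̃^t V)(c) = Σ_{i=1}^{t} γ^{i−1} Σ_m c(m)(Σ_ℓ p(ℓ|m,w̃))^i, and by convexity of x ↦ x^i, Σ_m c(m)(Σ_ℓ p(ℓ|m,w̃))^i ≥ (Σ_m c(m)Σ_ℓ p(ℓ|m,w̃))^i = ρ(c)^i. -/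
open Finset

lemma Vg_lower_aux {M L : Type*} [Fintype M] [Fintype L]
    (p : L → M → Finset L → ℝ) (γ : ℝ) (hγ0 : 0 < γ)
    (hp : ∀ (ℓ : L) (m : M) (w : Finset L), 0 ≤ p ℓ m w ∧ p ℓ m w ≤ 1)
    (A : Finset (Finset L)) (hA : A.Nonempty) :
    ∀ (t : ℕ) (c : M → ℝ), (∀ m, 0 ≤ c m) → (∑ m, c m = 1) → ∀ w ∈ A,
    ∑ i ∈ Finset.range t, γ ^ i * ∑ m, c m * (∑ ℓ, p ℓ m w) ^ (i + 1)
      ≤ Vg p γ A hA t c := by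
  intro t
  induction t with
  | zero => intro c _ _ w _; simp [Vg]
  | succ t ih =>
    intro c hc0 hc1 w hw
    refine le_trans ?_ (Finset.le_sup' (fun w => Qfun p γ (Vg p γ A hA t) w c) hw)
    set S : L → ℝ := fun ℓ => ∑ m, c m * p ℓ m w with hS
    have hSnn : ∀ ℓ, 0 ≤ S ℓ := fun ℓ =>
      Finset.sum_nonneg fun m _ => mul_nonneg (hc0 m) (hp ℓ m w).1
    have hQ : Qfun p γ (Vg p γ A hA t) w c
        = ∑ ℓ, (S ℓ + γ * (S ℓ * Vg p γ A hA t (post p c ℓ w))) := by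
      rw [Qfun, Finset.sum_comm]
      refine Finset.sum_congr rfl fun ℓ _ => ?_
      rw [hS]
      simp only [mul_add, mul_one, Finset.sum_add_distrib, ← Finset.sum_mul]
      ring
    rw [hQ]
    -- key per-ℓ claim
    have key : ∀ ℓ, ∑ i ∈ Finset.range t,
        γ ^ i * ∑ m, (c m * p ℓ m w) * (∑ ℓ', p ℓ' m w) ^ (i + 1)
        ≤ S ℓ * Vg p γ A hA t (post p c ℓ w) := by
      intro ℓ
      rcases eq_or_lt_of_le (hSnn ℓ) with h0 | hpos
      · have hz : ∀ m, c m * p ℓ m w = 0 := by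
          intro m
          have := (Finset.sum_eq_zero_iff_of_nonneg
            (fun m _ => mul_nonneg (hc0 m) (hp ℓ m w).1)).mp h0.symm
          exact this m (Finset.mem_univ m)
        rw [← h0]
        simp [hz]
      · have hS0 : (∑ m, p ℓ m w * c m) = S ℓ := by
          rw [hS]; exact Finset.sum_congr rfl fun m _ => mul_comm _ _
        have hSne : S ℓ ≠ 0 := ne_of_gt hpos
        have hpost0 : ∀ m, 0 ≤ post p c ℓ w m := fun m =>
          div_nonneg (mul_nonneg (hp ℓ m w).1 (hc0 m)) (hS0 ▸ hpos.le)
        have hpost1 : ∑ m, post p c ℓ w m = 1 := by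
          simp only [post, ← Finset.sum_div, hS0]
          exact div_self hSne
        have := ih (post p c ℓ w) hpost0 hpost1 w hw
        calc ∑ i ∈ Finset.range t,
            γ ^ i * ∑ m, (c m * p ℓ m w) * (∑ ℓ', p ℓ' m w) ^ (i + 1)
            = S ℓ * ∑ i ∈ Finset.range t,
              γ ^ i * ∑ m, post p c ℓ w m * (∑ ℓ', p ℓ' m w) ^ (i + 1) := by
              rw [Finset.mul_sum]
              refine Finset.sum_congr rfl fun i _ => ?_
              have hpm : ∀ m ∈ (Finset.univ : Finset M),
                  c m * p ℓ m w * (∑ ℓ', p ℓ' m w) ^ (i + 1)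
                  = S ℓ * (post p c ℓ w m * (∑ ℓ', p ℓ' m w) ^ (i + 1)) := by
                intro m _
                simp only [post, hS0]
                have hx : S ℓ * (p ℓ m w * c m / S ℓ) = p ℓ m w * c m := by
                  field_simp
                rw [← mul_assoc, hx]
                ring
              rw [Finset.sum_congr rfl hpm, ← Finset.mul_sum]
              ring
          _ ≤ S ℓ * Vg p γ A hA t (post p c ℓ w) :=
              mul_le_mul_of_nonneg_left this hpos.le
    -- assemble
    have h1 : ∑ m, c m * (∑ ℓ, p ℓ m w) ^ (0 + 1) = ∑ ℓ, S ℓ := by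
      simp only [zero_add, pow_one, Finset.mul_sum, hS]
      exact Finset.sum_comm
    have hswap : γ * ∑ ℓ, ∑ i ∈ Finset.range t,
          γ ^ i * ∑ m, (c m * p ℓ m w) * (∑ ℓ', p ℓ' m w) ^ (i + 1)
        = ∑ i ∈ Finset.range t, γ ^ (i + 1) * ∑ m, c m * (∑ ℓ, p ℓ m w) ^ (i + 1 + 1) := by
      rw [Finset.sum_comm, Finset.mul_sum]
      refine Finset.sum_congr rfl fun i _ => ?_
      rw [← Finset.mul_sum, Finset.sum_comm]
      have hm : ∀ m ∈ (Finset.univ : Finset M),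
          ∑ ℓ, (c m * p ℓ m w) * (∑ ℓ', p ℓ' m w) ^ (i + 1)
          = c m * (∑ ℓ, p ℓ m w) ^ (i + 1 + 1) := by
        intro m _
        rw [← Finset.sum_mul, ← Finset.mul_sum, pow_succ _ (i + 1)]
        ring
      rw [Finset.sum_congr rfl hm]
      ring
    have h2 : ∑ i ∈ Finset.range t, γ ^ (i + 1) * ∑ m, c m * (∑ ℓ, p ℓ m w) ^ (i + 1 + 1)
        ≤ ∑ ℓ, γ * (S ℓ * Vg p γ A hA t (post p c ℓ w)) := by
      rw [← hswap, Finset.mul_sum]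
      exact Finset.sum_le_sum fun ℓ _ => mul_le_mul_of_nonneg_left (key ℓ) hγ0.le
    rw [Finset.sum_range_succ', Finset.sum_add_distrib]
    simp only [pow_zero, one_mul]
    linarith [h1, h2]

/-- Lower bound on the exact value iterates: playing at each round the action maximizing
the one-step continuation probability `ρ(c) = max_w Σ_m Σ_ℓ c(m) p(ℓ|m,w)` shows, via
Jensen's inequality, that `(T^t V)(c) ≥ Σ_{i=1}^t γ^{i−1} ρ(c)^i` for zero-initialized `V`. -/
theorem exact_value_lower_bound {M L : Type*} [Fintype M] [Fintype L]
    (p : L → M → Finset L → ℝ) (γ : ℝ) (hγ0 : 0 < γ) (hγ1 : γ ≤ 1)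
    (hp : ∀ (ℓ : L) (m : M) (w : Finset L), 0 ≤ p ℓ m w ∧ p ℓ m w ≤ 1)
    (hsum : ∀ (m : M) (w : Finset L), ∑ ℓ, p ℓ m w ≤ 1)
    (A : Finset (Finset L)) (hA : A.Nonempty)
    (t : ℕ) (c : M → ℝ) (hc0 : ∀ m, 0 ≤ c m) (hc1 : ∑ m, c m = 1) :
    ∑ i ∈ Finset.range t, γ ^ i * (A.sup' hA (fun w => ∑ m, ∑ ℓ, c m * p ℓ m w)) ^ (i + 1)
      ≤ Vg p γ A hA t c := by
  obtain ⟨w, hw, hweq⟩ := Finset.exists_mem_eq_sup' hA (fun w => ∑ m, ∑ ℓ, c m * p ℓ m w)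
  refine le_trans ?_ (Vg_lower_aux p γ hγ0 hp A hA t c hc0 hc1 w hw)
  refine Finset.sum_le_sum fun i _ => ?_
  refine mul_le_mul_of_nonneg_left ?_ (pow_nonneg hγ0.le i)
  rw [hweq]
  have hrw : ∑ m, ∑ ℓ, c m * p ℓ m w = ∑ m, c m * ∑ ℓ, p ℓ m w := by
    simp [Finset.mul_sum]
  rw [hrw]
  exact Real.pow_arith_mean_le_arith_mean_pow Finset.univ c (fun m => ∑ ℓ, p ℓ m w)
    (fun m _ => hc0 m) hc1
    (fun m _ => Finset.sum_nonneg fun ℓ _ => (hp ℓ m w).1) (i + 1)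
end
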